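/- arXiv:1912.04239 — 4 statements merged into one kernel-verified Lean document; each statement's English description precedes it below -/
import Mathlib

section
/- Let G be a weighted graph with distinct edge weights whose vertex set is partitioned into groups V'_1,...,V'_k. For each pair i ≤ j let E_{i,j} be the set of edges with one endpoint in V'_i and the other in V'_j, and let F_{i,j} be a minimum spanning forest of the graph (V'_i ∪ V'_j, E_{i,j}). Then every edge of the minimum spanning tree of G belongs to ⋃_{i≤j} F_{i,j}. -/
open scoped Classical

variable {V : Type*}

def IsSpanningTree (G T : SimpleGraph V) : Prop := T ≤ G ∧ T.IsTree

noncomputable def treeWeight [Fintype V] (w : Sym2 V → ℝ) (T : SimpleGraph V) : ℝ :=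
  ∑ e ∈ T.edgeSet.toFinset, w e

def IsMST [Fintype V] (G : SimpleGraph V) (w : Sym2 V → ℝ) (T : SimpleGraph V) : Prop :=
  IsSpanningTree G T ∧ ∀ T' : SimpleGraph V, IsSpanningTree G T' → treeWeight w T ≤ treeWeight w T'

/-- A spanning forest of `H`: an acyclic subgraph preserving the reachability of `H`. -/
def IsSpanningForest (H F : SimpleGraph V) : Prop :=
  F ≤ H ∧ F.IsAcyclic ∧ ∀ u v : V, H.Reachable u v → F.Reachable u v

def IsMSF [Fintype V] (H : SimpleGraph V) (w : Sym2 V → ℝ) (F : SimpleGraph V) : Prop :=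
  IsSpanningForest H F ∧
    ∀ F' : SimpleGraph V, IsSpanningForest H F' → treeWeight w F ≤ treeWeight w F'

/-- The graph of edges of `G` with one endpoint in group `i` and the other in group `j`. -/
def betweenGraph {k : ℕ} (G : SimpleGraph V) (g : V → Fin k) (i j : Fin k) : SimpleGraph V where
  Adj u v := G.Adj u v ∧ ((g u = i ∧ g v = j) ∨ (g u = j ∧ g v = i))
  symm := by constructor; intro u v ⟨h, hc⟩; exact ⟨h.symm, by tauto⟩
  loopless := by constructor; intro u ⟨h, _⟩; exact G.loopless.irrefl u h

/-! Let `s(u, v)` be an edge of the minimum spanning tree `T`, and `F` the minimum spanning forest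
for the pair of groups of `u` and `v`. If `s(u, v) ∉ F`, the `F`-path from `u` to `v` crosses the
cut of `T - s(u, v)` along some edge `s(a, b)`. Then `T - s(u, v) + s(a, b)` is a spanning tree
and `F - s(a, b) + s(u, v)` a spanning forest, so minimality of both forces
`w s(u, v) = w s(a, b)`, and distinct weights give `s(u, v) = s(a, b) ∈ F`. -/

namespace SimpleGraph

variable {A B : SimpleGraph V}

lemma reachable_le_of_adj (h : ∀ x y, A.Adj x y → B.Reachable x y) :
    A.Reachable ≤ B.Reachable := by
  rw [reachable_eq_reflTransGen, reachable_eq_reflTransGen] at *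
  exact Relation.reflTransGen_closed h

lemma Walk.reachable_deleteEdges_or {c d x y : V} (p : A.Walk c d) :
    (A.deleteEdges {s(x, y)}).Reachable c d ∨ (A.deleteEdges {s(x, y)}).Reachable c x ∨
      (A.deleteEdges {s(x, y)}).Reachable c y := by
  induction p with
  | nil => exact .inl .rfl
  | @cons a b d hab _ ih =>
    by_cases he : s(a, b) = s(x, y)
    · rcases Sym2.eq_iff.mp he with ⟨rfl, -⟩ | ⟨rfl, -⟩
      · exact .inr (.inl .rfl)
      · exact .inr (.inr .rfl)
    · have hab' : (A.deleteEdges {s(x, y)}).Adj a b := (deleteEdges_adj ..).mpr ⟨hab, he⟩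
      exact ih.imp hab'.reachable.trans (Or.imp hab'.reachable.trans hab'.reachable.trans)

lemma reachable_deleteEdges_sup_edge {x y c d : V} (hcd : A.Reachable c d)
    (hsep : ¬(A.deleteEdges {s(x, y)}).Reachable c d) :
    (A.deleteEdges {s(x, y)} ⊔ edge c d).Reachable x y := by
  obtain ⟨p⟩ := hcd
  have hne : c ≠ d := by rintro rfl; exact hsep .rfl
  have hcd' : (A.deleteEdges {s(x, y)} ⊔ edge c d).Reachable c d :=
    Adj.reachable (.inr (by simp [edge_adj, hne]))
  have lift {u v : V} : (A.deleteEdges {s(x, y)}).Reachable u v →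
      (A.deleteEdges {s(x, y)} ⊔ edge c d).Reachable u v := .mono le_sup_left
  rcases p.reachable_deleteEdges_or.resolve_left hsep with hc | hc <;>
  rcases p.reverse.reachable_deleteEdges_or.resolve_left (hsep ∘ .symm) with hd | hd
  · exact absurd (hc.trans hd.symm) hsep
  · exact ((lift hc).symm.trans hcd').trans (lift hd)
  · exact ((lift hd).symm.trans hcd'.symm).trans (lift hc)
  · exact absurd (hc.trans hd.symm) hsep

lemma IsAcyclic.not_reachable_deleteEdges_of_mem_edges (hA : A.IsAcyclic) {u v x y : V}
    {p : A.Walk u v} (hp : p.IsTrail) (he : s(x, y) ∈ p.edges) :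
    ¬(A.deleteEdges {s(x, y)}).Reachable u v := by
  intro huv
  -- a trail through `s(x, y)` keeps both `x` and `y` reachable from `u`, but `s(x, y)` is a bridge
  have reach_snd {a b : V} (hab : s(a, b) ∈ p.edges)
      (hreach : (A.deleteEdges {s(a, b)}).Reachable u v) :
      (A.deleteEdges {s(a, b)}).Reachable u b := by
    by_contra hub
    exact hp.not_mem_edges_of_not_reachable hub (fun hvb ↦ hub (hreach.trans hvb)) hab
  have hy := reach_snd he huv
  have hx := reach_snd (Sym2.eq_swap ▸ he) (Sym2.eq_swap ▸ huv)
  rw [Sym2.eq_swap] at hx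
  exact isAcyclic_iff_forall_adj_isBridge.mp hA (p.adj_of_mem_edges he) (hx.symm.trans hy)

lemma IsAcyclic.exists_adj_not_reachable_deleteEdges (hA : A.IsAcyclic) {u v : V}
    (hreach : A.Reachable u v) (hsep : ¬B.Reachable u v) :
    ∃ a b, A.Adj a b ∧ ¬B.Reachable a b ∧ ¬(A.deleteEdges {s(a, b)}).Reachable u v := by
  obtain ⟨p, hp⟩ := hreach.exists_isPath
  obtain ⟨d, hd, hu, hv⟩ := p.exists_boundary_dart {x | B.Reachable u x} .rfl hsep
  exact ⟨d.fst, d.snd, d.adj, fun hab ↦ hv (hu.trans hab),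
    hA.not_reachable_deleteEdges_of_mem_edges hp.isTrail (List.mem_map_of_mem hd)⟩

end SimpleGraph

open SimpleGraph

lemma IsSpanningForest.deleteEdges_sup_edge {H F : SimpleGraph V} (hF : IsSpanningForest H F)
    {a b u v : V} (huv : H.Adj u v) (hsep : ¬(F.deleteEdges {s(a, b)}).Reachable u v) :
    IsSpanningForest H (F.deleteEdges {s(a, b)} ⊔ edge u v) := by
  obtain ⟨hle, hacyc, hreach⟩ := hF
  refine ⟨sup_le ((deleteEdges_le _).trans hle) ((edge_le_iff H).mpr (.inr huv)),
    (hacyc.anti (deleteEdges_le _)).sup_edge_of_not_reachable hsep,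
    fun x y hxy ↦ reachable_le_of_adj (fun x y hxy ↦ ?_) x y (hreach x y hxy)⟩
  by_cases he : s(x, y) = s(a, b)
  · have hab := reachable_deleteEdges_sup_edge (hreach u v huv.reachable) hsep
    rcases Sym2.eq_iff.mp he with ⟨rfl, rfl⟩ | ⟨rfl, rfl⟩
    exacts [hab, hab.symm]
  · exact Adj.reachable (.inl ((deleteEdges_adj ..).mpr ⟨hxy, he⟩))

lemma IsSpanningForest.isSpanningTree {G F : SimpleGraph V} (hF : IsSpanningForest G F)
    (hG : G.Connected) : IsSpanningTree G F :=
  ⟨hF.1, { preconnected := fun u v ↦ hF.2.2 u v (hG u v), nonempty := hG.nonempty }, hF.2.1⟩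

lemma betweenGraph_le {k : ℕ} (G : SimpleGraph V) (g : V → Fin k) (i j : Fin k) :
    betweenGraph G g i j ≤ G :=
  fun _ _ h ↦ h.1

lemma betweenGraph_adj_min_max {k : ℕ} {G : SimpleGraph V} (g : V → Fin k) {u v : V}
    (h : G.Adj u v) : (betweenGraph G g (min (g u) (g v)) (max (g u) (g v))).Adj u v :=
  ⟨h, by rcases le_total (g u) (g v) with h | h <;> simp [h]⟩

section Weight

variable [Fintype V]

lemma treeWeight_deleteEdges_sup_edge (w : Sym2 V → ℝ) {A : SimpleGraph V} {e : Sym2 V}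
    {u v : V} (he : e ∈ A.edgeSet) (huv : s(u, v) ∉ A.edgeSet) (hne : u ≠ v) :
    treeWeight w (A.deleteEdges {e} ⊔ edge u v) = treeWeight w A - w e + w s(u, v) := by
  unfold treeWeight
  calc _ = ∑ f ∈ insert s(u, v) (A.edgeSet.toFinset.erase e), w f := by
        congr 1
        ext f
        simp only [Set.mem_toFinset, edgeSet_sup, edgeSet_deleteEdges, edgeSet_edge_of_ne hne,
          Finset.mem_insert, Finset.mem_erase, Set.mem_union, Set.mem_sdiff, Set.mem_singleton_iff]
        tauto
    _ = _ := by
      rw [Finset.sum_insert fun h ↦ huv (Set.mem_toFinset.mp (Finset.mem_of_mem_erase h)),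
        ← Finset.add_sum_erase _ _ (Set.mem_toFinset.mpr he)]
      ring

lemma IsMST.isMSF {G T : SimpleGraph V} {w : Sym2 V → ℝ} (hT : IsMST G w T) : IsMSF G w T := by
  obtain ⟨⟨hle, htree⟩, hmin⟩ := hT
  exact ⟨⟨hle, htree.isAcyclic, fun u v _ ↦ htree.connected u v⟩,
    fun F hF ↦ hmin F (hF.isSpanningTree (htree.connected.mono hle))⟩

lemma IsMSF.weight_le_of_not_reachable_deleteEdges {H F : SimpleGraph V} {w : Sym2 V → ℝ}
    (hF : IsMSF H w F) {a b u v : V}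
    (hab : F.Adj a b) (huv : H.Adj u v) (hsep : ¬(F.deleteEdges {s(a, b)}).Reachable u v) :
    w s(a, b) ≤ w s(u, v) := by
  by_cases heq : s(u, v) = s(a, b)
  · rw [heq]
  have huvF : s(u, v) ∉ F.edgeSet :=
    fun h ↦ hsep (Adj.reachable ((deleteEdges_adj ..).mpr ⟨h, heq⟩))
  have hmin := hF.2 _ (hF.1.deleteEdges_sup_edge huv hsep)
  rw [treeWeight_deleteEdges_sup_edge w hab huvF huv.ne] at hmin
  linarith

end Weight

theorem mst_edges_in_pairwise_msf_general [Fintype V] {k : ℕ}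
    (G : SimpleGraph V) (w : Sym2 V → ℝ) (g : V → Fin k)
    (hinj : ∀ e ∈ G.edgeSet, ∀ e' ∈ G.edgeSet, w e = w e' → e = e')
    (F : Fin k → Fin k → SimpleGraph V)
    (hF : ∀ i j : Fin k, i ≤ j → IsMSF (betweenGraph G g i j) w (F i j))
    (T : SimpleGraph V) (hT : IsMST G w T) :
    ∀ e ∈ T.edgeSet, ∃ i j : Fin k, i ≤ j ∧ e ∈ (F i j).edgeSet := by
  intro e he
  induction e using Sym2.ind with | _ u v => ?_
  have hTuv : T.Adj u v := he
  have hGuv : G.Adj u v := hT.1.1 hTuv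
  have hHuv := betweenGraph_adj_min_max g hGuv
  have hFuv := hF _ _ (min_le_max (a := g u) (b := g v))
  refine ⟨min (g u) (g v), max (g u) (g v), min_le_max, ?_⟩
  by_contra huvF
  have hbridge : ¬(T.deleteEdges {s(u, v)}).Reachable u v :=
    isAcyclic_iff_forall_adj_isBridge.mp hT.1.2.isAcyclic hTuv
  obtain ⟨a, b, hab, hsepT, hsepF⟩ :=
    hFuv.1.2.1.exists_adj_not_reachable_deleteEdges (hFuv.1.2.2 u v hHuv.reachable) hbridge
  have hGab : G.Adj a b := betweenGraph_le G g _ _ (hFuv.1.1 hab)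
  have huv_le : w s(u, v) ≤ w s(a, b) :=
    hT.isMSF.weight_le_of_not_reachable_deleteEdges hTuv hGab hsepT
  have hab_le : w s(a, b) ≤ w s(u, v) :=
    hFuv.weight_le_of_not_reachable_deleteEdges hab hHuv hsepF
  have heq : s(u, v) = s(a, b) := hinj _ hGuv _ hGab (le_antisymm huv_le hab_le)
  exact huvF (heq ▸ hab)

/-- every MST edge of `G` is contained in some minimum spanning forest
`F_{i,j}` of the edges between groups `V'_i` and `V'_j`. -/
theorem mst_edges_in_pairwise_msf [Fintype V] {k : ℕ}
    (G : SimpleGraph V) (w : Sym2 V → ℝ) (g : V → Fin k)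
    (hG : G.Connected)
    (hinj : ∀ e ∈ G.edgeSet, ∀ e' ∈ G.edgeSet, w e = w e' → e = e')
    (F : Fin k → Fin k → SimpleGraph V)
    (hF : ∀ i j : Fin k, i ≤ j → IsMSF (betweenGraph G g i j) w (F i j))
    (T : SimpleGraph V) (hT : IsMST G w T) :
    ∀ e ∈ T.edgeSet, ∃ i j : Fin k, i ≤ j ∧ e ∈ (F i j).edgeSet :=
  mst_edges_in_pairwise_msf_general G w g hinj F hF T hT
end

section
/- Let G be a graph on n vertices with m edges and average degree Δ_A = 2m/n. If each vertex of degree δ > Δ_A is split into ⌈δ/Δ_A⌉ vertices, each assigned at most Δ_A of its original edges and connected in a path, then the resulting graph has at most 3n vertices, each of degree at most Δ_A + 2. -/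
open scoped Classical

/-!
A vertex of degree `δ` is replaced by `max 1 ⌈δ/Δ_A⌉ ≤ ⌊δ/Δ_A⌋ + 1` copies, so by the handshake
lemma the split graph has at most `∑ᵥ (⌊δ(v)/Δ_A⌋ + 1) ≤ 2m/Δ_A + n ≤ 2n` vertices. The degree
bound is immediate: each copy carries at most `Δ_A` original edges and at most two path edges.
-/

open Finset

theorem Nat.max_one_add_sub_one_div_le_div_add_one (a b : ℕ) :
    max 1 ((a + b - 1) / b) ≤ a / b + 1 := by
  refine max_le (Nat.le_add_left 1 _) ?_
  rcases Nat.eq_zero_or_pos b with rfl | hb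
  · simp
  calc (a + b - 1) / b ≤ (a + b) / b := Nat.div_le_div_right (Nat.sub_le _ _)
    _ = a / b + 1 := Nat.add_div_right _ hb

theorem Finset.sum_nat_div_le_sum_div {ι : Type*} (s : Finset ι) (f : ι → ℕ) (b : ℕ) :
    ∑ i ∈ s, f i / b ≤ (∑ i ∈ s, f i) / b := by
  induction s using Finset.cons_induction with
  | empty => simp
  | cons i s hi ih =>
    rw [sum_cons, sum_cons]
    exact (Nat.add_le_add_left ih _).trans Nat.div_add_div_le_add_div

namespace SimpleGraph

variable {V : Type*} [Fintype V] (G : SimpleGraph V) [DecidableRel G.Adj]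

theorem sum_degree_div_le_card {Δ : ℕ} (hΔ : 2 * #G.edgeFinset ≤ Δ * Fintype.card V) :
    ∑ v, G.degree v / Δ ≤ Fintype.card V :=
  calc ∑ v, G.degree v / Δ ≤ (∑ v, G.degree v) / Δ := sum_nat_div_le_sum_div _ _ _
    _ = 2 * #G.edgeFinset / Δ := by rw [sum_degrees_eq_twice_card_edges]
    _ ≤ Fintype.card V := Nat.div_le_of_le_mul hΔ

/-- The vertex count of the split graph: `π` sends each copy to the vertex it was split from. -/
theorem card_le_two_mul_card_of_card_fiber_eq {V' : Type*} [Fintype V'] {Δ : ℕ}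
    (hΔ : 2 * #G.edgeFinset ≤ Δ * Fintype.card V) (π : V' → V)
    (hfiber : ∀ v, #{x | π x = v} = max 1 ((G.degree v + Δ - 1) / Δ)) :
    Fintype.card V' ≤ 2 * Fintype.card V :=
  calc Fintype.card V' = ∑ v, #{x | π x = v} :=
        card_eq_sum_card_fiberwise fun x _ => mem_univ (π x)
    _ ≤ ∑ v, (G.degree v / Δ + 1) := sum_le_sum fun v _ =>
        (hfiber v).trans_le (Nat.max_one_add_sub_one_div_le_div_add_one _ _)
    _ = ∑ v, G.degree v / Δ + Fintype.card V := by simp [sum_add_distrib]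
    _ ≤ 2 * Fintype.card V := by linarith [G.sum_degree_div_le_card hΔ]

end SimpleGraph

theorem degree_splitting_bound_general
    {V V' : Type*} [Fintype V] [Fintype V']
    (G : SimpleGraph V) [DecidableRel G.Adj]
    (G' : SimpleGraph V') [DecidableRel G'.Adj]
    (n m ΔA : ℕ) (hn : n = Fintype.card V) (hm : m = G.edgeFinset.card)
    (hΔA : 2 * m ≤ ΔA * n)
    (π : V' → V)
    -- each vertex `v` is split into `max 1 ⌈degree(v)/Δ_A⌉` copies
    (hfiber : ∀ v : V,
      (Finset.univ.filter (fun x : V' => π x = v)).card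
        = max 1 ((G.degree v + ΔA - 1) / ΔA))
    -- each copy is incident to at most `Δ_A` original edges and at most `2` path edges
    (orig pathd : V' → ℕ)
    (hdeg : ∀ x : V', G'.degree x = orig x + pathd x)
    (horig : ∀ x : V', orig x ≤ ΔA) (hpath : ∀ x : V', pathd x ≤ 2) :
    Fintype.card V' ≤ 3 * n ∧ ∀ x : V', G'.degree x ≤ ΔA + 2 := by
  subst hn hm
  refine ⟨?_, fun x => ?_⟩
  · have := G.card_le_two_mul_card_of_card_fiber_eq hΔA π hfiber
    omega
  · rw [hdeg x]
    exact Nat.add_le_add (horig x) (hpath x)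

/-- splitting each vertex of degree `δ > Δ_A` into `⌈δ/Δ_A⌉` vertices, each
receiving at most `Δ_A` original edges and at most `2` path edges, yields a graph with at
most `3n` vertices, each of degree at most `Δ_A + 2`. -/
theorem degree_splitting_bound
    {V V' : Type*} [Fintype V] [Fintype V']
    (G : SimpleGraph V) [DecidableRel G.Adj]
    (G' : SimpleGraph V') [DecidableRel G'.Adj]
    (n m ΔA : ℕ) (hn : n = Fintype.card V) (hm : m = G.edgeFinset.card)
    (hn1 : 1 ≤ n) (hm1 : 1 ≤ m)
    (hΔ1 : 1 ≤ ΔA) (hΔA : 2 * m ≤ ΔA * n)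
    (π : V' → V)
    -- each vertex `v` is split into `max 1 ⌈degree(v)/Δ_A⌉` copies
    (hfiber : ∀ v : V,
      (Finset.univ.filter (fun x : V' => π x = v)).card
        = max 1 ((G.degree v + ΔA - 1) / ΔA))
    -- each copy is incident to at most `Δ_A` original edges and at most `2` path edges
    (orig pathd : V' → ℕ)
    (hdeg : ∀ x : V', G'.degree x = orig x + pathd x)
    (horig : ∀ x : V', orig x ≤ ΔA) (hpath : ∀ x : V', pathd x ≤ 2) :
    Fintype.card V' ≤ 3 * n ∧ ∀ x : V', G'.degree x ≤ ΔA + 2 :=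
  degree_splitting_bound_general G G' n m ΔA hn hm hΔA π hfiber orig pathd hdeg horig hpath
end

section
/- Consider the following two-stage edge-selection process on a finite graph G: first, each vertex v selects one edge to a neighbor u maximizing (degree(u), ID(u)) lexicographically; second, each vertex v that has an incident edge {u,v} not selected by u in the first stage selects one such edge. Let H be the graph of all selected edges. Then every vertex of degree δ in G lies in a connected component of H of size at least δ + 1. -/
open scoped Classical

variable {V : Type*}

/-- Lexicographic order on pairs `(degree, ID)`. -/
def lexLe (a b : ℕ × ℕ) : Prop := a.1 < b.1 ∨ (a.1 = b.1 ∧ a.2 ≤ b.2)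

/-- The graph of all edges marked in the two-stage selection process: `f1 v` is the
neighbor chosen by `v` in stage one, `f2 v` the (optional) neighbor chosen in stage two. -/
def markedGraph (G : SimpleGraph V) (f1 : V → V) (f2 : V → Option V) : SimpleGraph V where
  Adj a b := G.Adj a b ∧ (f1 a = b ∨ f1 b = a ∨ f2 a = some b ∨ f2 b = some a)
  symm := ⟨by intro a b ⟨h, hc⟩; exact ⟨h.symm, by tauto⟩⟩
  loopless := ⟨fun a h => G.loopless.irrefl a h.1⟩

/-!
Let `m` be the vertex of largest `(degree, ID)` in the component of `v` in `H`. If some neighbor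
`u` of `m` did not choose `m` in stage one, then `m` marked an edge `{m, c}` in stage two with
`f1 c ≠ m`. But `f1 c` lies in the same component, and it beats `m` in `(degree, ID)` because `c`
preferred it to its neighbor `m`; by maximality and injectivity of `ID`, `f1 c = m`, which is
absurd. So every `G`-neighbor of `m` is joined to `m` in `H`, and the component has at least
`degree m + 1 ≥ degree v + 1` vertices.
-/

open SimpleGraph Function

theorem lexLe_iff_toLex_le {a b : ℕ × ℕ} : lexLe a b ↔ toLex a ≤ toLex b := by
  rw [Prod.Lex.le_iff]
  rfl

theorem SimpleGraph.degree_add_one_le_ncard_supp [Fintype V] {G H : SimpleGraph V}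
    [DecidableRel G.Adj] {m : V} (hGH : ∀ u, G.Adj m u → H.Adj m u) :
    G.degree m + 1 ≤ (H.connectedComponentMk m).supp.ncard := by
  have hsub : insert m (G.neighborFinset m) ⊆ (H.connectedComponentMk m).supp.toFinset := by
    intro x hx
    rw [Set.mem_toFinset, ConnectedComponent.mem_supp_iff]
    rcases Finset.mem_insert.1 hx with rfl | hx
    · rfl
    · exact (ConnectedComponent.connectedComponentMk_eq_of_adj
        (hGH x ((G.mem_neighborFinset m x).1 hx))).symm
  calc G.degree m + 1 = (insert m (G.neighborFinset m)).card := by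
        rw [Finset.card_insert_of_notMem (by simp), card_neighborFinset_eq_degree]
    _ ≤ (H.connectedComponentMk m).supp.ncard := by
        rw [Set.ncard_eq_toFinset_card']
        exact Finset.card_le_card hsub

section markedGraph

variable {G : SimpleGraph V} {f1 : V → V} {f2 : V → Option V} {v u : V}

theorem markedGraph_adj_of_f1_eq (h : G.Adj v u) (hu : f1 v = u) :
    (markedGraph G f1 f2).Adj v u :=
  ⟨h, Or.inl hu⟩

theorem markedGraph_adj_of_f2_eq (h : G.Adj v u) (hu : f2 v = some u) :
    (markedGraph G f1 f2).Adj v u :=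
  ⟨h, Or.inr (Or.inr (Or.inl hu))⟩

end markedGraph

section rank

variable [Fintype V] (G : SimpleGraph V) [DecidableRel G.Adj] (ID : V → ℕ)

def rank (v : V) : ℕ ×ₗ ℕ :=
  toLex (G.degree v, ID v)

variable {G ID}

theorem rank_injective (hID : Injective ID) : Injective (rank G ID) := fun _ _ h =>
  hID (congrArg Prod.snd (toLex.injective h))

theorem degree_le_of_rank_le {u v : V} (h : rank G ID u ≤ rank G ID v) :
    G.degree u ≤ G.degree v :=
  (Prod.Lex.monotone_fst _ _ h :)

end rank

theorem f1_eq_of_forall_rank_le [Fintype V] {G : SimpleGraph V} [DecidableRel G.Adj]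
    {ID : V → ℕ} (hID : Injective ID) {f1 : V → V} {f2 : V → Option V}
    (hf1 : ∀ v : V, 0 < G.degree v → G.Adj v (f1 v) ∧
      ∀ u : V, G.Adj v u → lexLe (G.degree u, ID u) (G.degree (f1 v), ID (f1 v)))
    (hf2a : ∀ v u : V, f2 v = some u → G.Adj v u ∧ f1 u ≠ v)
    (hf2b : ∀ v : V, (∃ u : V, G.Adj v u ∧ f1 u ≠ v) → ∃ u : V, f2 v = some u)
    {m : V} (hmax : ∀ x ∈ ((markedGraph G f1 f2).connectedComponentMk m).supp,
      rank G ID x ≤ rank G ID m)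
    {u : V} (hu : G.Adj m u) : f1 u = m := by
  by_contra hne
  obtain ⟨c, hc⟩ := hf2b m ⟨u, hu, hne⟩
  obtain ⟨hmc, hcm⟩ := hf2a m c hc
  have hc_pos : 0 < G.degree c := (G.degree_pos_iff_exists_adj c).2 ⟨m, hmc.symm⟩
  have hreach : (markedGraph G f1 f2).Reachable m (f1 c) :=
    (markedGraph_adj_of_f2_eq hmc hc).reachable.trans
      (markedGraph_adj_of_f1_eq (hf1 c hc_pos).1 rfl).reachable
  have hrank : rank G ID (f1 c) = rank G ID m :=
    le_antisymm (hmax _ (ConnectedComponent.sound hreach).symm)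
      (lexLe_iff_toLex_le.1 ((hf1 c hc_pos).2 m hmc.symm))
  exact hcm (rank_injective hID hrank)

/-- after the two-stage edge selection, every vertex of degree `δ` lies in a
connected component of the selected-edges graph of size at least `δ + 1`. -/
theorem reduce_components_component_size
    [Fintype V] (G : SimpleGraph V) [DecidableRel G.Adj]
    (ID : V → ℕ) (hID : Function.Injective ID)
    (f1 : V → V) (f2 : V → Option V)
    -- stage one: each non-isolated `v` marks the edge to the neighbor maximizing (degree, ID)
    (hf1 : ∀ v : V, 0 < G.degree v → G.Adj v (f1 v) ∧
      ∀ u : V, G.Adj v u → lexLe (G.degree u, ID u) (G.degree (f1 v), ID (f1 v)))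
    -- stage two: marks only unmarked incident edges...
    (hf2a : ∀ v u : V, f2 v = some u → G.Adj v u ∧ f1 u ≠ v)
    -- ...and marks one whenever one exists
    (hf2b : ∀ v : V, (∃ u : V, G.Adj v u ∧ f1 u ≠ v) → ∃ u : V, f2 v = some u) :
    ∀ v : V,
      G.degree v + 1 ≤ ((markedGraph G f1 f2).connectedComponentMk v).supp.ncard := by
  intro v
  set C := (markedGraph G f1 f2).connectedComponentMk v
  obtain ⟨m, hmC, hmax⟩ := Set.exists_max_image C.supp (rank G ID) (Set.toFinite _) ⟨v, rfl⟩
  have hCm : (markedGraph G f1 f2).connectedComponentMk m = C := hmC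
  have hm_nbrs : ∀ u, G.Adj m u → (markedGraph G f1 f2).Adj m u := fun u hu =>
    (markedGraph_adj_of_f1_eq hu.symm
      (f1_eq_of_forall_rank_le hID hf1 hf2a hf2b (hCm ▸ hmax) hu)).symm
  calc G.degree v + 1 ≤ G.degree m + 1 := by
        gcongr
        exact degree_le_of_rank_le (hmax v rfl)
    _ ≤ C.supp.ncard := hCm ▸ degree_add_one_le_ncard_supp hm_nbrs
end

section
/- Let G be a weighted graph with distinct edge weights, obtained from a weighted graph G₀ by splitting vertices into paths of new 'path edges', where every path edge is strictly lighter than every edge corresponding to an edge of G₀, and the path edges within each split vertex form a tree (path) spanning the copies of that vertex. Then the minimum spanning tree of G consists of all path edges together with a set of edges whose corresponding edges in G₀ form the minimum spanning tree of G₀. -/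
open scoped Classical

variable {V V₀ : Type*}

/-- The subgraph of `G` consisting of the path edges, i.e. edges inside a fiber of `π`. -/
def pathGraph (G : SimpleGraph V) (π : V → V₀) : SimpleGraph V where
  Adj u v := G.Adj u v ∧ π u = π v
  symm := ⟨by rintro u v ⟨h, he⟩; exact ⟨h.symm, he.symm⟩⟩
  loopless := ⟨fun u h => G.loopless.irrefl u h.1⟩

/-!
Everything follows from the cut property of a minimum spanning tree `T` (an edge that is the
strictly lightest one across some cut lies in `T`) and its converse (an edge of `T` is a lightest
edge across the cut obtained by deleting it from `T`). The path edges form a forest lighter than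
all other edges, so each is the lightest edge across the cut separating its two sides in that
forest. Hence deleting a non-path edge `uv` from `T` leaves a cut that is a union of fibres of
`π`; its image is a cut of `G₀` across which `π(uv)` is lightest, so `π(uv) ∈ T₀`. Conversely
the cut of `G₀` determined by an edge of `T₀` pulls back to a cut of `G` whose crossing edges
are exactly the lifts of the crossing edges in `G₀`.
-/

namespace SimpleGraph

variable {K : SimpleGraph V}

theorem Reachable.deleteEdges_reachable_or {z u v : V} (h : K.Reachable z u) :
    (K.deleteEdges {s(u, v)}).Reachable z u ∨ (K.deleteEdges {s(u, v)}).Reachable z v := by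
  obtain ⟨p⟩ := h
  induction p with
  | nil => exact .inl .rfl
  | @cons a c w hac _ ih =>
    by_cases he : s(a, c) = s(w, v)
    · rcases Sym2.eq_iff.mp he with ⟨rfl, -⟩ | ⟨rfl, -⟩
      · exact .inl .rfl
      · exact .inr .rfl
    · have hac' : (K.deleteEdges {s(w, v)}).Adj a c := (deleteEdges_adj ..).mpr ⟨hac, he⟩
      exact ih.imp hac'.reachable.trans hac'.reachable.trans

theorem Walk.IsPath.exists_adj_crossing {A : Set V} {u v : V} {p : K.Walk u v} (hp : p.IsPath)
    (hu : u ∈ A) (hv : v ∉ A) :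
    ∃ x y : V, K.Adj x y ∧ x ∈ A ∧ y ∉ A ∧
      (K.deleteEdges {s(x, y)}).Reachable u x ∧ (K.deleteEdges {s(x, y)}).Reachable y v := by
  induction p with
  | nil => exact absurd hu hv
  | @cons a c _ hac q ih =>
    rw [Walk.cons_isPath_iff] at hp
    by_cases hc : c ∈ A
    · obtain ⟨x, y, hxy, hx, hy, hcx, hyv⟩ := ih hp.1 hc hv
      -- `a` and `c` both lie in `A`, so `ac` is not the crossing edge `xy`
      have hne : s(a, c) ≠ s(x, y) := by
        rintro h
        rcases Sym2.eq_iff.mp h with ⟨-, rfl⟩ | ⟨rfl, -⟩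
        exacts [hy hc, hy hu]
      have hac' : (K.deleteEdges {s(x, y)}).Adj a c := (deleteEdges_adj ..).mpr ⟨hac, hne⟩
      exact ⟨x, y, hxy, hx, hy, hac'.reachable.trans hcx, hyv⟩
    · refine ⟨a, c, hac, hu, hc, .rfl, ⟨q.toDeleteEdges _ fun e he hea => ?_⟩⟩
      rw [Set.mem_singleton_iff] at hea
      exact hp.2 (q.fst_mem_support_of_mem_edges (hea ▸ he))

theorem IsAcyclic.not_reachable_deleteEdges {a₁ a₂ b₁ b₂ : V} (hK : K.IsAcyclic)
    (hb : K.Adj b₁ b₂) (h₁ : (K.deleteEdges {s(b₁, b₂)}).Reachable b₁ a₁)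
    (h₂ : (K.deleteEdges {s(b₁, b₂)}).Reachable b₂ a₂) :
    ¬ (K.deleteEdges {s(b₁, b₂)}).Reachable a₁ a₂ := fun h =>
  isAcyclic_iff_forall_adj_isBridge.mp hK hb (h₁.trans (h.trans h₂.symm))

end SimpleGraph

open SimpleGraph

theorem IsSpanningTree.exchange {G T : SimpleGraph V} (hT : IsSpanningTree G T)
    {a₁ a₂ b₁ b₂ : V} (ha : G.Adj a₁ a₂) (hb : T.Adj b₁ b₂)
    (h₁ : (T.deleteEdges {s(b₁, b₂)}).Reachable b₁ a₁)
    (h₂ : (T.deleteEdges {s(b₁, b₂)}).Reachable b₂ a₂) :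
    IsSpanningTree G (T.deleteEdges {s(b₁, b₂)} ⊔ edge a₁ a₂) := by
  set D := T.deleteEdges {s(b₁, b₂)}
  have hsep := hT.2.isAcyclic.not_reachable_deleteEdges hb h₁ h₂
  have hDle : D ≤ D ⊔ edge a₁ a₂ := le_sup_left
  have hnew : (D ⊔ edge a₁ a₂).Reachable a₂ a₁ :=
    (Adj.reachable (Or.inr ((edge_adj _ _ _ _).mpr ⟨.inl ⟨rfl, rfl⟩, ha.ne⟩))).symm
  refine ⟨sup_le ((deleteEdges_le _).trans hT.1) ((edge_le_iff _).mpr (.inr ha)),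
    (connected_iff_exists_forall_reachable _).mpr ⟨b₁, fun z => ?_⟩,
    (hT.2.isAcyclic.anti (deleteEdges_le _)).sup_edge_of_not_reachable hsep⟩
  rcases (hT.2.connected.preconnected z b₁).deleteEdges_reachable_or (v := b₂) with h | h
  · exact (h.mono hDle).symm
  · exact ((h.trans h₂).mono hDle |>.trans (hnew.trans (h₁.symm.mono hDle))).symm

section treeWeight

variable [Fintype V] {H : SimpleGraph V}

theorem treeWeight_sup_edge (w : Sym2 V → ℝ) {a b : V} (hab : a ≠ b) (h : ¬ H.Adj a b) :
    treeWeight w (H ⊔ edge a b) = treeWeight w H + w s(a, b) := by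
  have hedges : (H ⊔ edge a b).edgeSet = insert s(a, b) H.edgeSet := by
    rw [edgeSet_sup, edgeSet_edge_of_ne hab, Set.union_singleton]
  simp only [treeWeight, hedges, Set.toFinset_insert]
  rw [Finset.sum_insert (by simpa using h), add_comm]

theorem treeWeight_deleteEdges_singleton (w : Sym2 V → ℝ) {a b : V} (h : H.Adj a b) :
    treeWeight w (H.deleteEdges {s(a, b)}) = treeWeight w H - w s(a, b) := by
  simp only [treeWeight, edgeSet_deleteEdges, Set.toFinset_sdiff, Set.toFinset_singleton]
  rw [Finset.sum_sdiff_eq_sub (by simpa using h), Finset.sum_singleton]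

end treeWeight

namespace IsMST

variable [Fintype V] {G T : SimpleGraph V} {w : Sym2 V → ℝ}

theorem weight_le_of_exchange (hT : IsMST G w T) {a₁ a₂ b₁ b₂ : V} (ha : G.Adj a₁ a₂)
    (hb : T.Adj b₁ b₂) (h₁ : (T.deleteEdges {s(b₁, b₂)}).Reachable b₁ a₁)
    (h₂ : (T.deleteEdges {s(b₁, b₂)}).Reachable b₂ a₂) :
    w s(b₁, b₂) ≤ w s(a₁, a₂) := by
  have hnadj : ¬ (T.deleteEdges {s(b₁, b₂)}).Adj a₁ a₂ := fun h =>
    hT.1.2.isAcyclic.not_reachable_deleteEdges hb h₁ h₂ h.reachable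
  have hle := hT.2 _ (hT.1.exchange ha hb h₁ h₂)
  rw [treeWeight_sup_edge w ha.ne hnadj, treeWeight_deleteEdges_singleton w hb] at hle
  linarith

/-- The cut property. -/
theorem adj_of_forall_crossing_lt (hT : IsMST G w T) {A : Set V} {u v : V} (huv : G.Adj u v)
    (hu : u ∈ A) (hv : v ∉ A)
    (hmin : ∀ x y : V, G.Adj x y → x ∈ A → y ∉ A → s(x, y) ≠ s(u, v) → w s(u, v) < w s(x, y)) :
    T.Adj u v := by
  by_contra hna
  obtain ⟨p, hp⟩ := (hT.1.2.connected.preconnected u v).exists_isPath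
  obtain ⟨x, y, hxy, hx, hy, hux, hyv⟩ := hp.exists_adj_crossing hu hv
  have hne : s(x, y) ≠ s(u, v) := fun h => hna ((adj_congr_of_sym2 _ h).mp hxy)
  exact (hmin x y (hT.1.1 hxy) hx hy hne).not_ge (hT.weight_le_of_exchange huv hxy hux.symm hyv)

theorem weight_le_of_crossing (hT : IsMST G w T) {u v x y : V} (huv : T.Adj u v)
    (hxy : G.Adj x y) (hx : (T.deleteEdges {s(u, v)}).Reachable u x)
    (hy : ¬ (T.deleteEdges {s(u, v)}).Reachable u y) :
    w s(u, v) ≤ w s(x, y) := by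
  rcases (hT.1.2.connected.preconnected y u).deleteEdges_reachable_or (v := v) with hyu | hyv
  · exact absurd hyu.symm hy
  · exact hT.weight_le_of_exchange hxy huv hx hyv.symm

theorem le_of_isAcyclic (hT : IsMST G w T) {P : SimpleGraph V} (hPG : P ≤ G) (hP : P.IsAcyclic)
    (hlt : ∀ u v x y : V, P.Adj u v → G.Adj x y → ¬ P.Adj x y → w s(u, v) < w s(x, y)) :
    P ≤ T := by
  intro u v huv
  refine hT.adj_of_forall_crossing_lt (A := {z | (P.deleteEdges {s(u, v)}).Reachable u z})
    (hPG huv) .rfl (isAcyclic_iff_forall_adj_isBridge.mp hP huv) fun x y hxy hx hy hne => ?_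
  exact hlt u v x y huv hxy fun hPxy =>
    hy (hx.trans ((deleteEdges_adj ..).mpr ⟨hPxy, hne⟩).reachable)

end IsMST

section SplitGraph

variable [Fintype V] [Fintype V₀] {G T : SimpleGraph V} {G₀ T₀ : SimpleGraph V₀}
  {w : Sym2 V → ℝ} {w₀ : Sym2 V₀ → ℝ} {π : V → V₀}

theorem IsMST.adj_map_of_adj (hT : IsMST G w T) (hT₀ : IsMST G₀ w₀ T₀)
    (hw₀inj : ∀ e ∈ G₀.edgeSet, ∀ e' ∈ G₀.edgeSet, w₀ e = w₀ e' → e = e')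
    (hw : ∀ u v : V, G.Adj u v → π u ≠ π v → w s(u, v) = w₀ s(π u, π v))
    (hsurj : ∀ a b : V₀, G₀.Adj a b → ∃ u v : V, G.Adj u v ∧ π u = a ∧ π v = b)
    (hspan : ∀ u v : V, π u = π v → (pathGraph G π).Reachable u v) (hpath : pathGraph G π ≤ T)
    {u v : V} (huv : T.Adj u v) (h₀ : G₀.Adj (π u) (π v)) : T₀.Adj (π u) (π v) := by
  set D := T.deleteEdges {s(u, v)}
  -- all path edges survive in `D`, so the cut `D` defines in `V` is a union of fibres of `π`
  have hfibre : ∀ x y : V, π x = π y → D.Reachable x y := fun x y hxy =>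
    (hspan x y hxy).mono fun a b hab => (deleteEdges_adj ..).mpr ⟨hpath hab, fun he => by
      rcases Sym2.eq_iff.mp (Set.mem_singleton_iff.mp he) with ⟨rfl, rfl⟩ | ⟨rfl, rfl⟩
      exacts [h₀.ne hab.2, h₀.ne hab.2.symm]⟩
  have hbridge : ¬ D.Reachable u v := isAcyclic_iff_forall_adj_isBridge.mp hT.1.2.isAcyclic huv
  refine hT₀.adj_of_forall_crossing_lt (A := π '' {z | D.Reachable u z}) h₀ ⟨u, .rfl, rfl⟩
    (fun ⟨x, hx, hxv⟩ => hbridge (hx.trans (hfibre x v hxv))) ?_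
  rintro _ b hab ⟨x', hx', rfl⟩ hb hne
  obtain ⟨x, y, hxy, hxx', rfl⟩ := hsurj _ b hab
  have hle := hT.weight_le_of_crossing huv hxy (hx'.trans (hfibre x' x hxx'.symm))
    fun hy => hb ⟨y, hy, rfl⟩
  rw [hw u v (hT.1.1 huv) h₀.ne, hw x y hxy (hxx' ▸ hab.ne), hxx'] at hle
  exact hle.lt_of_ne fun h => hne (hw₀inj _ hab _ h₀ h.symm)

theorem IsMST.adj_of_adj_map (hT : IsMST G w T) (hT₀ : IsMST G₀ w₀ T₀)
    (hw₀inj : ∀ e ∈ G₀.edgeSet, ∀ e' ∈ G₀.edgeSet, w₀ e = w₀ e' → e = e')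
    (hadj : ∀ u v : V, G.Adj u v → π u = π v ∨ G₀.Adj (π u) (π v))
    (hw : ∀ u v : V, G.Adj u v → π u ≠ π v → w s(u, v) = w₀ s(π u, π v))
    (hinj : ∀ u v a b : V, G.Adj u v → G.Adj a b → π u ≠ π v →
      s(π u, π v) = s(π a, π b) → s(u, v) = s(a, b))
    {u v : V} (huv : G.Adj u v) (hne : π u ≠ π v) (h₀ : T₀.Adj (π u) (π v)) : T.Adj u v := by
  set D₀ := T₀.deleteEdges {s(π u, π v)}
  refine hT.adj_of_forall_crossing_lt (A := π ⁻¹' {c | D₀.Reachable (π u) c}) huv .rfl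
    (isAcyclic_iff_forall_adj_isBridge.mp hT₀.1.2.isAcyclic h₀) fun x y hxy hx hy hne' => ?_
  have hπ : π x ≠ π y := fun h => hy (by simpa [h] using hx)
  have hxy₀ : G₀.Adj (π x) (π y) := (hadj x y hxy).resolve_left hπ
  have hle := hT₀.weight_le_of_crossing h₀ hxy₀ hx hy
  rw [← hw u v huv hne, ← hw x y hxy hπ] at hle
  exact hle.lt_of_ne fun h => hne' (hinj x y u v hxy huv hπ
    (hw₀inj _ hxy₀ _ (hT₀.1.1 h₀) (by rw [← hw x y hxy hπ, ← hw u v huv hne, h])))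

end SplitGraph

theorem mst_of_split_graph_general [Fintype V] [Fintype V₀]
    (G₀ : SimpleGraph V₀) (w₀ : Sym2 V₀ → ℝ) (G : SimpleGraph V) (w : Sym2 V → ℝ)
    (π : V → V₀)
    (hw₀inj : ∀ e ∈ G₀.edgeSet, ∀ e' ∈ G₀.edgeSet, w₀ e = w₀ e' → e = e')
    -- every edge of `G` is a path edge or corresponds to an edge of `G₀`
    (hadj : ∀ u v : V, G.Adj u v → π u = π v ∨ G₀.Adj (π u) (π v))
    -- the path edges within each fiber form a tree spanning the fiber
    (hacyc : (pathGraph G π).IsAcyclic)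
    (hspan : ∀ u v : V, π u = π v → (pathGraph G π).Reachable u v)
    -- non-path edges inherit the weight of the corresponding edge of `G₀`
    (hw : ∀ u v : V, G.Adj u v → π u ≠ π v → w s(u, v) = w₀ s(π u, π v))
    -- every path edge is strictly lighter than every edge of `G₀`
    (hlight : ∀ u v : V, G.Adj u v → π u = π v →
      ∀ a b : V₀, G₀.Adj a b → w s(u, v) < w₀ s(a, b))
    -- the correspondence between non-path edges of `G` and edges of `G₀` is bijective
    (hcorr_inj : ∀ u v a b : V, G.Adj u v → G.Adj a b → π u ≠ π v →
      s(π u, π v) = s(π a, π b) → s(u, v) = s(a, b))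
    (hcorr_surj : ∀ a b : V₀, G₀.Adj a b → ∃ u v : V, G.Adj u v ∧ π u = a ∧ π v = b) :
    ∀ T : SimpleGraph V, ∀ T₀ : SimpleGraph V₀,
      IsMST G w T → IsMST G₀ w₀ T₀ →
      (∀ u v : V, G.Adj u v → π u = π v → T.Adj u v) ∧
      (∀ u v : V, G.Adj u v → π u ≠ π v → (T.Adj u v ↔ T₀.Adj (π u) (π v))) := by
  intro T T₀ hT hT₀
  have hpath : pathGraph G π ≤ T := hT.le_of_isAcyclic (fun _ _ h => h.1) hacyc
    fun u v x y huv hxy hnpath => by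
      have hne : π x ≠ π y := fun h => hnpath ⟨hxy, h⟩
      rw [hw x y hxy hne]
      exact hlight u v huv.1 huv.2 _ _ ((hadj x y hxy).resolve_left hne)
  refine ⟨fun u v huv hπ => hpath ⟨huv, hπ⟩, fun u v huv hne => ⟨fun h => ?_, ?_⟩⟩
  · exact hT.adj_map_of_adj hT₀ hw₀inj hw hcorr_surj hspan hpath h
      ((hadj u v huv).resolve_left hne)
  · exact hT.adj_of_adj_map hT₀ hw₀inj hadj hw hcorr_inj huv hne

/-- if `G` is obtained from `G₀` by splitting vertices into paths of path
edges, all strictly lighter than every edge of `G₀`, then the MST of `G` consists of all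
path edges together with the edges corresponding to the MST of `G₀`. -/
theorem mst_of_split_graph [Fintype V] [Fintype V₀]
    (G₀ : SimpleGraph V₀) (w₀ : Sym2 V₀ → ℝ) (G : SimpleGraph V) (w : Sym2 V → ℝ)
    (π : V → V₀)
    (hG₀ : G₀.Connected)
    (hw₀inj : ∀ e ∈ G₀.edgeSet, ∀ e' ∈ G₀.edgeSet, w₀ e = w₀ e' → e = e')
    (hwinj : ∀ e ∈ G.edgeSet, ∀ e' ∈ G.edgeSet, w e = w e' → e = e')
    -- every edge of `G` is a path edge or corresponds to an edge of `G₀`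
    (hadj : ∀ u v : V, G.Adj u v → π u = π v ∨ G₀.Adj (π u) (π v))
    -- the path edges within each fiber form a tree spanning the fiber
    (hacyc : (pathGraph G π).IsAcyclic)
    (hspan : ∀ u v : V, π u = π v → (pathGraph G π).Reachable u v)
    -- non-path edges inherit the weight of the corresponding edge of `G₀`
    (hw : ∀ u v : V, G.Adj u v → π u ≠ π v → w s(u, v) = w₀ s(π u, π v))
    -- every path edge is strictly lighter than every edge of `G₀`
    (hlight : ∀ u v : V, G.Adj u v → π u = π v →
      ∀ a b : V₀, G₀.Adj a b → w s(u, v) < w₀ s(a, b))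
    -- the correspondence between non-path edges of `G` and edges of `G₀` is bijective
    (hcorr_inj : ∀ u v a b : V, G.Adj u v → G.Adj a b → π u ≠ π v →
      s(π u, π v) = s(π a, π b) → s(u, v) = s(a, b))
    (hcorr_surj : ∀ a b : V₀, G₀.Adj a b → ∃ u v : V, G.Adj u v ∧ π u = a ∧ π v = b) :
    ∀ T : SimpleGraph V, ∀ T₀ : SimpleGraph V₀,
      IsMST G w T → IsMST G₀ w₀ T₀ →
      (∀ u v : V, G.Adj u v → π u = π v → T.Adj u v) ∧
      (∀ u v : V, G.Adj u v → π u ≠ π v → (T.Adj u v ↔ T₀.Adj (π u) (π v))) :=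
  mst_of_split_graph_general G₀ w₀ G w π hw₀inj hadj hacyc hspan hw hlight hcorr_inj hcorr_surj
end
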